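/- arXiv:1511.01031 — 2 statements merged into one kernel-verified Lean document; each statement's English description precedes it below -/
import Mathlib

section
/- Let L be a bounded distributive lattice. Then: (1) for every congruence φ of L, φ has the BLP if and only if φ has the FCLP; (2) L has the BLP if and only if L has the FCLP. -/
/-! Universal-algebra framework: algebras over a signature, congruences,
factor congruences, lifting properties. -/

structure Signature where
  ops : Type
  arity : ops → ℕ

structure Alg (σ : Signature) where
  carrier : Type
  interp : ∀ f : σ.ops, (Fin (σ.arity f) → carrier) → carrier

namespace Alg

variable {σ : Signature}

/-- A congruence: an equivalence relation compatible with all operations. -/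
def IsCon (A : Alg σ) (r : A.carrier → A.carrier → Prop) : Prop :=
  Equivalence r ∧
    ∀ (f : σ.ops) (x y : Fin (σ.arity f) → A.carrier),
      (∀ i, r (x i) (y i)) → r (A.interp f x) (A.interp f y)

/-- The least congruence `Δ_A`. -/
def delta (A : Alg σ) : A.carrier → A.carrier → Prop := fun a b => a = b

/-- The greatest congruence `∇_A = A²`. -/
def nabla (A : Alg σ) : A.carrier → A.carrier → Prop := fun _ _ => True

/-- Meet (intersection) of congruences. -/
def conMeet (A : Alg σ) (r s : A.carrier → A.carrier → Prop) :
    A.carrier → A.carrier → Prop := fun a b => r a b ∧ s a b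

/-- Join of congruences: the least congruence containing both. -/
def conJoin (A : Alg σ) (r s : A.carrier → A.carrier → Prop) :
    A.carrier → A.carrier → Prop := fun a b =>
  ∀ t, A.IsCon t → (∀ x y, r x y → t x y) → (∀ x y, s x y → t x y) → t a b

/-- The congruence generated by a set of pairs. -/
def conGen (A : Alg σ) (X : Set (A.carrier × A.carrier)) :
    A.carrier → A.carrier → Prop := fun a b =>
  ∀ t, A.IsCon t → (∀ p ∈ X, t p.1 p.2) → t a b

/-- Composition of relations: `(a,b) ∈ comp r s` iff `(a,x) ∈ s` and `(x,b) ∈ r`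
for some `x`. -/
def comp (A : Alg σ) (r s : A.carrier → A.carrier → Prop) :
    A.carrier → A.carrier → Prop := fun a b => ∃ x, s a x ∧ r x b

/-- Factor congruences: congruences `φ` having a congruence `φ*` with
`φ ∨ φ* = ∇`, `φ ∩ φ* = Δ` and `φ ∘ φ* = φ* ∘ φ`. -/
def IsFC (A : Alg σ) (φ : A.carrier → A.carrier → Prop) : Prop :=
  A.IsCon φ ∧ ∃ ψ, A.IsCon ψ ∧ A.conJoin φ ψ = A.nabla ∧
    A.conMeet φ ψ = A.delta ∧ A.comp φ ψ = A.comp ψ φ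

/-- Boolean congruences: complemented elements of the lattice `Con(A)`. -/
def IsBooleanCon (A : Alg σ) (φ : A.carrier → A.carrier → Prop) : Prop :=
  A.IsCon φ ∧ ∃ ψ, A.IsCon ψ ∧ A.conJoin φ ψ = A.nabla ∧ A.conMeet φ ψ = A.delta

/-- `A` is congruence-distributive iff the lattice `Con(A)` is distributive. -/
def CongDistrib (A : Alg σ) : Prop :=
  ∀ r s t, A.IsCon r → A.IsCon s → A.IsCon t →
    A.conMeet r (A.conJoin s t) = A.conJoin (A.conMeet r s) (A.conMeet r t)

/-- `A` is congruence-permutable iff all congruences permute under composition. -/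
def CongPermutable (A : Alg σ) : Prop :=
  ∀ r s, A.IsCon r → A.IsCon s → A.comp r s = A.comp s r

/-- Arithmetical = congruence-distributive + congruence-permutable. -/
def Arithmetical (A : Alg σ) : Prop := A.CongDistrib ∧ A.CongPermutable

/-- The quotient algebra `A/θ`. -/
noncomputable def quotAlg (A : Alg σ) (θ : A.carrier → A.carrier → Prop) :
    Alg σ where
  carrier := Quot θ
  interp f x := Quot.mk θ (A.interp f fun i => (x i).out)

/-- The image `α/θ = {(a/θ, b/θ) : (a,b) ∈ α}` of a relation in the quotient. -/
def quotRel (A : Alg σ) (θ α : A.carrier → A.carrier → Prop) :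
    Quot θ → Quot θ → Prop := fun x y =>
  ∃ a b, x = Quot.mk θ a ∧ y = Quot.mk θ b ∧ α a b

/-- `θ` has the Factor Congruence Lifting Property: the Boolean morphism
`FC(θ) : FC(A) → FC(A/θ)`, `ψ ↦ (ψ ∨ θ)/θ`, is surjective. -/
def HasFCLP (A : Alg σ) (θ : A.carrier → A.carrier → Prop) : Prop :=
  ∀ γ, (A.quotAlg θ).IsFC γ →
    ∃ ψ, A.IsFC ψ ∧ A.quotRel θ (A.conJoin ψ θ) = γ

/-- `θ` has the Congruence Boolean Lifting Property: the Boolean morphism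
`B(Con(A)) → B(Con(A/θ))`, `ψ ↦ (ψ ∨ θ)/θ`, is surjective. -/
def HasCBLP (A : Alg σ) (θ : A.carrier → A.carrier → Prop) : Prop :=
  ∀ γ, (A.quotAlg θ).IsBooleanCon γ →
    ∃ ψ, A.IsBooleanCon ψ ∧ A.quotRel θ (A.conJoin ψ θ) = γ

/-- `A` has FCLP iff every congruence of `A` has FCLP. -/
def AlgFCLP (A : Alg σ) : Prop := ∀ θ, A.IsCon θ → A.HasFCLP θ

/-- `A` has CBLP iff every congruence of `A` has CBLP. -/
def AlgCBLP (A : Alg σ) : Prop := ∀ θ, A.IsCon θ → A.HasCBLP θ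

/-- FC-normality. -/
def FCNormal (A : Alg σ) : Prop :=
  ∀ φ ψ, A.IsCon φ → A.IsCon ψ → A.comp φ ψ = A.nabla →
    ∃ α β, A.IsFC α ∧ A.IsFC β ∧ A.conMeet α β = A.delta ∧
      A.comp φ α = A.nabla ∧ A.comp ψ β = A.nabla

/-- B-normality. -/
def BNormal (A : Alg σ) : Prop :=
  ∀ φ ψ, A.IsCon φ → A.IsCon ψ → A.conJoin φ ψ = A.nabla →
    ∃ α β, A.IsBooleanCon α ∧ A.IsBooleanCon β ∧ A.conMeet α β = A.delta ∧
      A.conJoin φ α = A.nabla ∧ A.conJoin ψ β = A.nabla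

/-- Isomorphism of algebras. -/
def Iso (A B : Alg σ) : Prop :=
  ∃ e : A.carrier ≃ B.carrier,
    ∀ (f : σ.ops) (x : Fin (σ.arity f) → A.carrier),
      e (A.interp f x) = B.interp f fun i => e (x i)

/-- Direct product of a finite family of algebras. -/
def prodAlg {n : ℕ} (B : Fin n → Alg σ) : Alg σ where
  carrier := ∀ i, (B i).carrier
  interp f x := fun i => (B i).interp f fun j => x j i

/-- The product congruence `θ₁ × … × θₙ`. -/
def prodRel {n : ℕ} (B : Fin n → Alg σ)
    (θ : ∀ i, (B i).carrier → (B i).carrier → Prop) :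
    (prodAlg B).carrier → (prodAlg B).carrier → Prop :=
  fun x y => ∀ i, θ i (x i) (y i)

/-- Maximal congruences: maximal elements of `(Con(A) \ {∇}, ⊆)`. -/
def IsMaxCon (A : Alg σ) (θ : A.carrier → A.carrier → Prop) : Prop :=
  A.IsCon θ ∧ θ ≠ A.nabla ∧
    ∀ ψ, A.IsCon ψ → ψ ≠ A.nabla → (∀ a b, θ a b → ψ a b) → ψ = θ

/-- Prime congruences. -/
def IsPrimeCon (A : Alg σ) (θ : A.carrier → A.carrier → Prop) : Prop :=
  A.IsCon θ ∧ ∀ α β, A.IsCon α → A.IsCon β →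
    (∀ a b, α a b → β a b → θ a b) →
    (∀ a b, α a b → θ a b) ∨ ∀ a b, β a b → θ a b

end Alg

/-! The signature of bounded lattices, the Boolean center, and the BLP. -/

inductive LatOp | sup | inf | bot | top

abbrev latSig : Signature where
  ops := LatOp
  arity := fun f => match f with
    | .sup => 2 | .inf => 2 | .bot => 0 | .top => 0

/-- The algebra over `latSig` attached to a bounded lattice. -/
def latAlg (L : Type) [Lattice L] [BoundedOrder L] : Alg latSig where
  carrier := L
  interp := fun f => match f with
    | .sup => fun x => x 0 ⊔ x 1
    | .inf => fun x => x 0 ⊓ x 1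
    | .bot => fun _ => ⊥
    | .top => fun _ => ⊤

/-- A complemented element of an algebra over the bounded-lattice signature
(an element of the Boolean center). -/
def ComplementedElem (A : Alg latSig) (x : A.carrier) : Prop :=
  ∃ y, A.interp .inf ![x, y] = A.interp .bot ![] ∧
       A.interp .sup ![x, y] = A.interp .top ![]

/-- A congruence `θ` of a bounded lattice `L` has the Boolean Lifting Property
iff the Boolean morphism `B(L) → B(L/θ)`, `a ↦ a/θ`, is surjective. -/
def HasBLP (L : Type) [Lattice L] [BoundedOrder L] (θ : L → L → Prop) : Prop :=
  ∀ q : ((latAlg L).quotAlg θ).carrier,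
    ComplementedElem ((latAlg L).quotAlg θ) q →
    ∃ a : L, ComplementedElem (latAlg L) a ∧ Quot.mk θ a = q

/-! In a bounded distributive lattice `M` the factor congruences are exactly the kernels
`kerSup M a` of `x ↦ x ⊔ a` for complemented `a` (the complement `b` gives the kernel of
`x ↦ x ⊔ b` as partner, and conversely a factor pair `ψ, ψ*` splits `(⊥, ⊤)` through an element
`b` with `ψ ⊥ b` and `ψ* b ⊤`), and `a ↦ kerSup M a` is injective. So `FC(M) ≅ B(M)`, and since
`(kerSup L a ∨ φ)/φ = kerSup (L/φ) (a/φ)`, the map `FC(φ)` is `a ↦ a/φ` read through these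
isomorphisms: it is onto exactly when `B(L) → B(L/φ)` is. -/

namespace Alg

variable {σ : Signature} {A : Alg σ} {r s : A.carrier → A.carrier → Prop}

theorem comp_le_conJoin {x y : A.carrier} (h : A.comp r s x y) : A.conJoin r s x y := by
  obtain ⟨z, hxz, hzy⟩ := h
  intro t ht hrt hst
  exact ht.1.trans (hst _ _ hxz) (hrt _ _ hzy)

theorem IsCon.comp (hr : A.IsCon r) (hs : A.IsCon s) (hrs : A.comp r s = A.comp s r) :
    A.IsCon (A.comp r s) := by
  refine ⟨⟨fun x => ⟨x, hs.1.refl x, hr.1.refl x⟩, ?_, ?_⟩, ?_⟩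
  · rintro x y ⟨z, hxz, hzy⟩
    rw [hrs]
    exact ⟨z, hr.1.symm hzy, hs.1.symm hxz⟩
  · rintro x y w ⟨u, hxu, huy⟩ ⟨v, hyv, hvw⟩
    obtain ⟨z, huz, hzv⟩ : A.comp r s u v := by
      rw [hrs]
      exact ⟨y, huy, hyv⟩
    exact ⟨z, hs.1.trans hxu huz, hr.1.trans hzv hvw⟩
  · intro f x y hxy
    choose z hxz hzy using hxy
    exact ⟨A.interp f z, hs.2 f x z hxz, hr.2 f z y hzy⟩

theorem conJoin_eq_comp (hr : A.IsCon r) (hs : A.IsCon s) (hrs : A.comp r s = A.comp s r) :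
    A.conJoin r s = A.comp r s := by
  ext x y
  refine ⟨fun h => h _ (hr.comp hs hrs) ?_ ?_, comp_le_conJoin⟩
  · exact fun u v huv => ⟨u, hs.1.refl u, huv⟩
  · exact fun u v huv => ⟨v, huv, hr.1.refl v⟩

theorem quotRel_mk_mk_iff {θ α : A.carrier → A.carrier → Prop}
    (hθ : Equivalence θ) (hα : Equivalence α) (hθα : ∀ x y, θ x y → α x y) {a b : A.carrier} :
    A.quotRel θ α (Quot.mk θ a) (Quot.mk θ b) ↔ α a b := by
  refine ⟨fun ⟨x, y, hax, hby, hxy⟩ => ?_, fun h => ⟨a, b, rfl, rfl, h⟩⟩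
  rw [hθ.quot_mk_eq_iff] at hax hby
  exact hα.trans (hθα _ _ hax) (hα.trans hxy (hα.symm (hθα _ _ hby)))

end Alg

section LatticeCongruence

variable {L : Type} [Lattice L] [BoundedOrder L] {φ : L → L → Prop}

theorem isCon_latAlg_iff :
    (latAlg L).IsCon φ ↔ Equivalence φ ∧
      (∀ {a b c d}, φ a b → φ c d → φ (a ⊔ c) (b ⊔ d)) ∧
      (∀ {a b c d}, φ a b → φ c d → φ (a ⊓ c) (b ⊓ d)) := by
  refine ⟨fun hφ => ⟨hφ.1, fun hab hcd => ?_, fun hab hcd => ?_⟩, fun ⟨he, hsup, hinf⟩ => ⟨he, ?_⟩⟩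
  · exact hφ.2 .sup ![_, _] ![_, _] fun i => by fin_cases i <;> assumption
  · exact hφ.2 .inf ![_, _] ![_, _] fun i => by fin_cases i <;> assumption
  · intro f x y hxy
    cases f with
    | sup => exact hsup (hxy 0) (hxy 1)
    | inf => exact hinf (hxy 0) (hxy 1)
    | bot => exact he.refl _
    | top => exact he.refl _

theorem Alg.IsCon.sup (hφ : (latAlg L).IsCon φ) {a b c d : L} (hab : φ a b) (hcd : φ c d) :
    φ (a ⊔ c) (b ⊔ d) :=
  (isCon_latAlg_iff.mp hφ).2.1 hab hcd

theorem Alg.IsCon.inf (hφ : (latAlg L).IsCon φ) {a b c d : L} (hab : φ a b) (hcd : φ c d) :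
    φ (a ⊓ c) (b ⊓ d) :=
  (isCon_latAlg_iff.mp hφ).2.2 hab hcd

theorem Alg.IsCon.comap {M : Type} [Lattice M] [BoundedOrder M] (hφ : (latAlg L).IsCon φ)
    (g : LatticeHom M L) : (latAlg M).IsCon fun x y => φ (g x) (g y) := by
  refine isCon_latAlg_iff.mpr ⟨⟨fun x => hφ.1.refl _, hφ.1.symm, hφ.1.trans⟩, ?_, ?_⟩
  · intro a b c d hab hcd
    simpa only [map_sup] using hφ.sup hab hcd
  · intro a b c d hab hcd
    simpa only [map_inf] using hφ.inf hab hcd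

theorem isCon_latAlg_eq : (latAlg L).IsCon Eq :=
  ⟨eq_equivalence, fun _ _ _ h => congrArg _ (funext h)⟩

theorem complementedElem_latAlg_iff {a : L} : ComplementedElem (latAlg L) a ↔ IsComplemented a :=
  exists_congr fun _ => ⟨fun h => .of_eq h.1 h.2, fun h => ⟨h.inf_eq_bot, h.sup_eq_top⟩⟩

end LatticeCongruence

section KerSup

variable {M : Type} [DistribLattice M] [BoundedOrder M]

def supRightHom (a : M) : LatticeHom M M where
  toFun x := x ⊔ a
  map_sup' x y := sup_sup_distrib_right x y a
  map_inf' x y := sup_inf_right x y a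

def kerSup (M : Type) [Lattice M] (a : M) : M → M → Prop := fun x y => x ⊔ a = y ⊔ a

theorem isCon_kerSup (a : M) : (latAlg M).IsCon (kerSup M a) :=
  isCon_latAlg_eq.comap (supRightHom a)

theorem kerSup_bot_iff {a x : M} : kerSup M a x ⊥ ↔ x ≤ a := by
  rw [kerSup, bot_sup_eq, sup_eq_right]

theorem kerSup_injective : Function.Injective (kerSup M) :=
  fun a b h => eq_of_forall_le_iff fun x => by rw [← kerSup_bot_iff, ← kerSup_bot_iff, h]

theorem IsCompl.comp_kerSup_eq_nabla {a b : M} (h : IsCompl a b) :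
    (latAlg M).comp (kerSup M a) (kerSup M b) = (latAlg M).nabla := by
  ext (x : M) (y : M)
  refine iff_of_true ⟨((x ⊔ b) ⊓ (y ⊔ a) : M), ?_, ?_⟩ trivial
  · show x ⊔ b = (x ⊔ b) ⊓ (y ⊔ a) ⊔ b
    rw [sup_inf_right, sup_assoc y, h.sup_eq_top, sup_top_eq, inf_top_eq, sup_assoc, sup_idem]
  · show (x ⊔ b) ⊓ (y ⊔ a) ⊔ a = y ⊔ a
    rw [sup_inf_right, sup_assoc x, h.symm.sup_eq_top, sup_top_eq, top_inf_eq, sup_assoc, sup_idem]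

theorem IsCompl.conMeet_kerSup_eq_delta {a b : M} (h : IsCompl a b) :
    (latAlg M).conMeet (kerSup M a) (kerSup M b) = (latAlg M).delta := by
  ext (x : M) (y : M)
  refine ⟨fun ⟨hxa, hxb⟩ => ?_, fun (hxy : x = y) => hxy ▸ ⟨rfl, rfl⟩⟩
  show x = y
  rw [← sup_bot_eq x, ← sup_bot_eq y, ← h.inf_eq_bot, sup_inf_left, sup_inf_left, hxa, hxb]

theorem isFC_kerSup {a : M} (ha : IsComplemented a) : (latAlg M).IsFC (kerSup M a) := by
  obtain ⟨b, h⟩ := ha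
  have hperm :
      (latAlg M).comp (kerSup M a) (kerSup M b) = (latAlg M).comp (kerSup M b) (kerSup M a) :=
    h.comp_kerSup_eq_nabla.trans h.symm.comp_kerSup_eq_nabla.symm
  refine ⟨isCon_kerSup a, kerSup M b, isCon_kerSup b, ?_, h.conMeet_kerSup_eq_delta, hperm⟩
  rw [Alg.conJoin_eq_comp (isCon_kerSup a) (isCon_kerSup b) hperm, h.comp_kerSup_eq_nabla]

theorem kerSup_eq_of_disjoint {ψ ψ' : M → M → Prop} (hψ : (latAlg M).IsCon ψ)
    (hψ' : (latAlg M).IsCon ψ') (hdisj : ∀ x y, ψ x y → ψ' x y → x = y) {b : M}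
    (hb : ψ ⊥ b) (hb' : ψ' b ⊤) : ψ = kerSup M b := by
  have hψ'_top (x : M) : ψ' (x ⊔ b) ⊤ := by simpa using hψ'.sup (hψ'.1.refl x) hb'
  have hψ_sup (x : M) : ψ x (x ⊔ b) := by simpa using hψ.sup (hψ.1.refl x) hb
  ext x y
  refine ⟨fun hxy => hdisj _ _ ?_ ?_, fun (hxy : x ⊔ b = y ⊔ b) => ?_⟩
  · exact hψ.sup hxy (hψ.1.refl b)
  · exact hψ'.1.trans (hψ'_top x) (hψ'.1.symm (hψ'_top y))
  · exact hψ.1.trans (hψ_sup x) (hxy ▸ hψ.1.symm (hψ_sup y))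

theorem exists_kerSup_of_isFC {ψ : M → M → Prop} (h : (latAlg M).IsFC ψ) :
    ∃ b, IsComplemented b ∧ ψ = kerSup M b := by
  obtain ⟨hψ, ψ', hψ', hjoin, hmeet, hperm⟩ := h
  have hcomp (x y : M) : (latAlg M).comp ψ ψ' x y := by
    rw [← Alg.conJoin_eq_comp hψ hψ' hperm, hjoin]
    trivial
  have hdisj (x y : M) (h : ψ x y) (h' : ψ' x y) : x = y :=
    Eq.mp (congrFun (congrFun hmeet x) y) ⟨h, h'⟩
  obtain ⟨a, hψ'a, hψa⟩ : ∃ a : M, ψ' (⊥ : M) a ∧ ψ a ⊤ := hcomp ⊥ ⊤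
  obtain ⟨b, hψb, hψ'b⟩ : ∃ b : M, ψ ⊥ b ∧ ψ' b (⊤ : M) := by
    have h := hcomp ⊥ ⊤
    rwa [hperm] at h
  have hψ_eq := kerSup_eq_of_disjoint hψ hψ' hdisj hψb hψ'b
  have hψ'_eq := kerSup_eq_of_disjoint hψ' hψ (fun x y h' h => hdisj x y h h') hψ'a hψa
  subst hψ_eq hψ'_eq
  refine ⟨b, ⟨a, .of_eq ?_ ?_⟩, rfl⟩
  · exact hdisj _ _ (kerSup_bot_iff.mpr inf_le_left) (kerSup_bot_iff.mpr inf_le_right)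
  · rw [sup_comm]
    exact (hψa : a ⊔ b = ⊤ ⊔ b).trans (top_sup_eq b)

theorem isFC_latAlg_iff {ψ : M → M → Prop} :
    (latAlg M).IsFC ψ ↔ ∃ a, IsComplemented a ∧ ψ = kerSup M a :=
  ⟨exists_kerSup_of_isFC, fun ⟨_, ha, hψ⟩ => hψ ▸ isFC_kerSup ha⟩

theorem conJoin_kerSup {φ : M → M → Prop} (hφ : (latAlg M).IsCon φ) (a : M) :
    (latAlg M).conJoin (kerSup M a) φ = fun (x y : M) => φ (x ⊔ a) (y ⊔ a) := by
  ext (x : M) (y : M)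
  refine ⟨fun h => h _ (hφ.comap (supRightHom a)) ?_ ?_, fun h t ht hat hφt => ?_⟩
  · exact fun (u v : M) (huv : u ⊔ a = v ⊔ a) => (huv ▸ hφ.1.refl (u ⊔ a : M) : φ (u ⊔ a) (v ⊔ a))
  · exact fun (u v : M) huv => hφ.sup huv (hφ.1.refl a)
  · have hsup (z : M) : t z (z ⊔ a : M) := hat _ _ (sup_right_idem z a).symm
    exact ht.1.trans (hsup x) (ht.1.trans (hφt _ _ h) (ht.1.symm (hsup y)))

end KerSup

section QuotientLattice

variable {L : Type} [DistribLattice L] [BoundedOrder L] {φ : L → L → Prop}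
  [hφ : Fact ((latAlg L).IsCon φ)]

/- The operations are defined through representatives exactly as in `Alg.quotAlg`, so that
`quotAlg_interp` holds by `rfl`. -/
noncomputable instance : Max (Quot φ) := ⟨fun p q => Quot.mk φ (p.out ⊔ q.out)⟩

noncomputable instance : Min (Quot φ) := ⟨fun p q => Quot.mk φ (p.out ⊓ q.out)⟩

theorem Quot.rel_out_mk (a : L) : φ (Quot.mk φ a).out a :=
  (hφ.out.1.quot_mk_eq_iff _ _).mp (Quot.out_eq _)

theorem Quot.mk_sup_mk (a b : L) : Quot.mk φ a ⊔ Quot.mk φ b = Quot.mk φ (a ⊔ b) :=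
  Quot.sound (hφ.out.sup (rel_out_mk a) (rel_out_mk b))

theorem Quot.mk_inf_mk (a b : L) : Quot.mk φ a ⊓ Quot.mk φ b = Quot.mk φ (a ⊓ b) :=
  Quot.sound (hφ.out.inf (rel_out_mk a) (rel_out_mk b))

noncomputable instance : Lattice (Quot φ) :=
  Lattice.mk'
    (by rintro ⟨a⟩ ⟨b⟩; simp only [Quot.mk_sup_mk, sup_comm])
    (by rintro ⟨a⟩ ⟨b⟩ ⟨c⟩; simp only [Quot.mk_sup_mk, sup_assoc])
    (by rintro ⟨a⟩ ⟨b⟩; simp only [Quot.mk_inf_mk, inf_comm])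
    (by rintro ⟨a⟩ ⟨b⟩ ⟨c⟩; simp only [Quot.mk_inf_mk, inf_assoc])
    (by rintro ⟨a⟩ ⟨b⟩; simp only [Quot.mk_sup_mk, Quot.mk_inf_mk, sup_inf_self])
    (by rintro ⟨a⟩ ⟨b⟩; simp only [Quot.mk_sup_mk, Quot.mk_inf_mk, inf_sup_self])

noncomputable instance : DistribLattice (Quot φ) :=
  .ofInfSupLe <| by
    rintro ⟨a⟩ ⟨b⟩ ⟨c⟩
    simp only [Quot.mk_sup_mk, Quot.mk_inf_mk]
    rw [inf_sup_left]

noncomputable instance : BoundedOrder (Quot φ) where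
  top := Quot.mk φ ⊤
  le_top := by
    rintro ⟨a⟩
    exact sup_eq_right.mp ((Quot.mk_sup_mk a ⊤).trans (congrArg _ (sup_top_eq a)))
  bot := Quot.mk φ ⊥
  bot_le := by
    rintro ⟨a⟩
    exact sup_eq_right.mp ((Quot.mk_sup_mk ⊥ a).trans (congrArg _ (bot_sup_eq a)))

theorem quotAlg_interp : ((latAlg L).quotAlg φ).interp = (latAlg (Quot φ)).interp := by
  funext f x
  cases f <;> rfl

theorem isFC_quotAlg_iff {γ : Quot φ → Quot φ → Prop} :
    ((latAlg L).quotAlg φ).IsFC γ ↔ (latAlg (Quot φ)).IsFC γ := by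
  change (Alg.mk (Quot φ) ((latAlg L).quotAlg φ).interp).IsFC γ ↔ _
  rw [quotAlg_interp]
  rfl

theorem complementedElem_quotAlg_iff {q : Quot φ} :
    ComplementedElem ((latAlg L).quotAlg φ) q ↔ IsComplemented q :=
  complementedElem_latAlg_iff (L := Quot φ)

theorem quotRel_conJoin_kerSup (a : L) :
    (latAlg L).quotRel φ ((latAlg L).conJoin (kerSup L a) φ) = kerSup (Quot φ) (Quot.mk φ a) := by
  rw [conJoin_kerSup hφ.out]
  refine funext fun p => funext fun q => Quot.induction_on₂ p q fun (x y : L) => ?_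
  refine propext <| (Alg.quotRel_mk_mk_iff hφ.out.1 (hφ.out.comap (supRightHom a)).1
    fun x y h => hφ.out.sup h (hφ.out.1.refl a)).trans ?_
  show φ (x ⊔ a) (y ⊔ a) ↔ Quot.mk φ x ⊔ Quot.mk φ a = Quot.mk φ y ⊔ Quot.mk φ a
  rw [Quot.mk_sup_mk, Quot.mk_sup_mk]
  exact (hφ.out.1.quot_mk_eq_iff _ _).symm

end QuotientLattice

theorem hasBLP_iff_hasFCLP {L : Type} [DistribLattice L] [BoundedOrder L] {φ : L → L → Prop}
    (hφ : (latAlg L).IsCon φ) : HasBLP L φ ↔ (latAlg L).HasFCLP φ := by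
  have : Fact ((latAlg L).IsCon φ) := ⟨hφ⟩
  constructor
  · intro hblp γ hγ
    obtain ⟨q, hq, rfl⟩ := isFC_latAlg_iff.mp (isFC_quotAlg_iff.mp hγ)
    obtain ⟨a, ha, rfl⟩ := hblp q (complementedElem_quotAlg_iff.mpr hq)
    exact ⟨kerSup L a, isFC_kerSup (complementedElem_latAlg_iff.mp ha), quotRel_conJoin_kerSup a⟩
  · intro hfclp q hq
    obtain ⟨ψ, hψ, hlift⟩ :=
      hfclp _ (isFC_quotAlg_iff.mpr (isFC_kerSup (complementedElem_quotAlg_iff.mp hq)))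
    obtain ⟨a, ha, rfl⟩ := isFC_latAlg_iff.mp hψ
    exact ⟨a, complementedElem_latAlg_iff.mpr ha,
      kerSup_injective ((quotRel_conJoin_kerSup a).symm.trans hlift)⟩

/-- In a bounded distributive lattice, BLP coincides with FCLP, both for
individual congruences and for the lattice itself. -/
theorem stmt_13 (L : Type) [DistribLattice L] [BoundedOrder L] :
    (∀ φ, (latAlg L).IsCon φ → (HasBLP L φ ↔ (latAlg L).HasFCLP φ)) ∧
    ((∀ φ, (latAlg L).IsCon φ → HasBLP L φ) ↔ (latAlg L).AlgFCLP) :=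
  ⟨fun _ => hasBLP_iff_hasFCLP, forall₂_congr fun _ => hasBLP_iff_hasFCLP⟩
end

section
/- Let A be a congruence-distributive algebra. Then every prime congruence of A has both the FCLP and the CBLP. -/
/-! If `γ, δ` are complements in `Con(A/θ)`, their preimages in `A` meet in `θ`, so primeness
of `θ` forces `γ = Δ` or `δ = Δ`. Hence `B(Con(A/θ)) = {Δ, ∇}`, and these lift to the factor
congruences `Δ_A` and `∇_A`. -/

namespace Alg

variable {σ : Signature} {A : Alg σ}

section Basic

variable (A)

theorem isCon_delta : A.IsCon A.delta :=
  ⟨⟨fun _ => rfl, fun h => h.symm, fun h h' => h.trans h'⟩,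
    fun _ _ _ h => congrArg _ (funext h)⟩

theorem isCon_nabla : A.IsCon A.nabla :=
  ⟨⟨fun _ => trivial, fun _ => trivial, fun _ _ => trivial⟩, fun _ _ _ _ => trivial⟩

theorem conJoin_delta_left {θ : A.carrier → A.carrier → Prop} (hθ : A.IsCon θ) :
    A.conJoin A.delta θ = θ := by
  funext a b
  refine propext ⟨fun h => h θ hθ (fun x _ hxy => hxy ▸ hθ.1.refl x) fun _ _ => id, ?_⟩
  exact fun h t _ _ hθt => hθt a b h

theorem conJoin_delta_right {θ : A.carrier → A.carrier → Prop} (hθ : A.IsCon θ) :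
    A.conJoin θ A.delta = θ := by
  funext a b
  refine propext ⟨fun h => h θ hθ (fun _ _ => id) fun x _ hxy => hxy ▸ hθ.1.refl x, ?_⟩
  exact fun h t _ hθt _ => hθt a b h

theorem conJoin_nabla_left (θ : A.carrier → A.carrier → Prop) :
    A.conJoin A.nabla θ = A.nabla := by
  funext a b
  exact propext ⟨fun _ => trivial, fun _ t _ ht _ => ht a b trivial⟩

theorem comp_delta_nabla : A.comp A.delta A.nabla = A.comp A.nabla A.delta := by
  funext a b
  exact propext ⟨fun _ => ⟨a, rfl, trivial⟩, fun _ => ⟨b, trivial, rfl⟩⟩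

theorem isFC_delta : A.IsFC A.delta := by
  refine ⟨A.isCon_delta, A.nabla, A.isCon_nabla, A.conJoin_delta_left A.isCon_nabla, ?_,
    A.comp_delta_nabla⟩
  funext a b
  exact propext ⟨And.left, fun h => ⟨h, trivial⟩⟩

theorem isFC_nabla : A.IsFC A.nabla := by
  refine ⟨A.isCon_nabla, A.delta, A.isCon_delta, A.conJoin_nabla_left _, ?_,
    A.comp_delta_nabla.symm⟩
  funext a b
  exact propext ⟨And.right, fun h => ⟨trivial, h⟩⟩

end Basic

theorem IsFC.isBooleanCon {φ : A.carrier → A.carrier → Prop} (h : A.IsFC φ) :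
    A.IsBooleanCon φ :=
  let ⟨hφ, ψ, hψ, hjoin, hmeet, _⟩ := h
  ⟨hφ, ψ, hψ, hjoin, hmeet⟩

section Quotient

variable {θ : A.carrier → A.carrier → Prop}

theorem mk_eq_mk_iff (hθ : A.IsCon θ) {a b : A.carrier} :
    Quot.mk θ a = Quot.mk θ b ↔ θ a b :=
  Quot.eq.trans hθ.1.eqvGen_iff

theorem quotAlg_interp_mk (hθ : A.IsCon θ) (f : σ.ops) (x : Fin (σ.arity f) → A.carrier) :
    (A.quotAlg θ).interp f (fun i => Quot.mk θ (x i)) = Quot.mk θ (A.interp f x) :=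
  Quot.sound <| hθ.2 f _ _ fun _ => (mk_eq_mk_iff hθ).1 (Quot.out_eq _)

def comapMk (θ : A.carrier → A.carrier → Prop) (γ : Quot θ → Quot θ → Prop) :
    A.carrier → A.carrier → Prop :=
  fun a b => γ (Quot.mk θ a) (Quot.mk θ b)

theorem IsCon.comapMk (hθ : A.IsCon θ) {γ : Quot θ → Quot θ → Prop}
    (hγ : (A.quotAlg θ).IsCon γ) : A.IsCon (comapMk θ γ) := by
  refine ⟨⟨fun _ => hγ.1.refl _, hγ.1.symm, hγ.1.trans⟩, fun f x y hxy => ?_⟩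
  simp only [Alg.comapMk, ← quotAlg_interp_mk hθ]
  exact hγ.2 f _ _ hxy

theorem eq_delta_of_comapMk_le {γ : Quot θ → Quot θ → Prop} (hγ : (A.quotAlg θ).IsCon γ)
    (hle : ∀ a b, comapMk θ γ a b → θ a b) : γ = (A.quotAlg θ).delta := by
  funext x y
  refine propext ⟨fun h => ?_, fun h => h ▸ hγ.1.refl x⟩
  induction x using Quot.ind
  induction y using Quot.ind
  exact Quot.sound (hle _ _ h)

theorem quotRel_conJoin_delta (hθ : A.IsCon θ) :
    A.quotRel θ (A.conJoin A.delta θ) = (A.quotAlg θ).delta := by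
  rw [A.conJoin_delta_left hθ]
  funext x y
  refine propext ⟨fun ⟨a, b, hx, hy, hab⟩ => hx ▸ hy ▸ Quot.sound hab, fun h => ?_⟩
  induction x using Quot.ind
  exact ⟨_, _, rfl, h.symm, hθ.1.refl _⟩

theorem quotRel_conJoin_nabla :
    A.quotRel θ (A.conJoin A.nabla θ) = (A.quotAlg θ).nabla := by
  rw [A.conJoin_nabla_left]
  funext x y
  refine propext ⟨fun _ => trivial, fun _ => ?_⟩
  induction x using Quot.ind
  induction y using Quot.ind
  exact ⟨_, _, rfl, rfl, trivial⟩

end Quotient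

theorem IsPrimeCon.eq_delta_or_eq_nabla_of_isBooleanCon {θ : A.carrier → A.carrier → Prop}
    (hθ : A.IsPrimeCon θ) {γ : Quot θ → Quot θ → Prop}
    (hγ : (A.quotAlg θ).IsBooleanCon γ) :
    γ = (A.quotAlg θ).delta ∨ γ = (A.quotAlg θ).nabla := by
  obtain ⟨hγ, δ, hδ, hjoin, hmeet⟩ := hγ
  have hmeet_le : ∀ a b, comapMk θ γ a b → comapMk θ δ a b → θ a b := by
    intro a b hγab hδab
    have hmk : (A.quotAlg θ).conMeet γ δ (Quot.mk θ a) (Quot.mk θ b) := ⟨hγab, hδab⟩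
    rw [hmeet] at hmk
    exact (mk_eq_mk_iff hθ.1).1 hmk
  rcases hθ.2 _ _ (hθ.1.comapMk hγ) (hθ.1.comapMk hδ) hmeet_le with hγθ | hδθ
  · exact .inl (eq_delta_of_comapMk_le hγ hγθ)
  · rw [eq_delta_of_comapMk_le hδ hδθ, conJoin_delta_right _ hγ] at hjoin
    exact .inr hjoin

theorem IsPrimeCon.exists_isFC_lift {θ : A.carrier → A.carrier → Prop} (hθ : A.IsPrimeCon θ)
    {γ : Quot θ → Quot θ → Prop} (hγ : (A.quotAlg θ).IsBooleanCon γ) :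
    ∃ ψ, A.IsFC ψ ∧ A.quotRel θ (A.conJoin ψ θ) = γ := by
  rcases hθ.eq_delta_or_eq_nabla_of_isBooleanCon hγ with rfl | rfl
  · exact ⟨A.delta, A.isFC_delta, quotRel_conJoin_delta hθ.1⟩
  · exact ⟨A.nabla, A.isFC_nabla, quotRel_conJoin_nabla⟩

end Alg

theorem stmt_15_general {σ : Signature} (A : Alg σ) (θ : A.carrier → A.carrier → Prop)
    (hθ : A.IsPrimeCon θ) : A.HasFCLP θ ∧ A.HasCBLP θ := by
  refine ⟨fun γ hγ => hθ.exists_isFC_lift hγ.isBooleanCon, fun γ hγ => ?_⟩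
  obtain ⟨ψ, hψ, hlift⟩ := hθ.exists_isFC_lift hγ
  exact ⟨ψ, hψ.isBooleanCon, hlift⟩

/-- Every prime congruence of a congruence-distributive algebra has both
the FCLP and the CBLP. -/
theorem stmt_15 {σ : Signature} (A : Alg σ) (hne : Nonempty A.carrier)
    (hcd : A.CongDistrib) (θ : A.carrier → A.carrier → Prop)
    (hθ : A.IsPrimeCon θ) : A.HasFCLP θ ∧ A.HasCBLP θ :=
  stmt_15_general A θ hθ
end
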